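/- Fix κ > 0 with ℙ(ω(0) ≥ κ) > 0. There exist constants 0 < C₁, C₂, C₃ < ∞ and M ∈ ℕ such that for all sufficiently large m there is an event A_m with ℙ(A_m^c) ≤ C₁ e^{−C₂ m} on which e(0,x,ω) ≤ e^{−C₃ m} holds simultaneously for all x ∈ Z^d with ‖x‖₁ = m. -/

import Mathlib

/-!
Every path from `0` that is stopped on hitting `x` visits at least `|x|₁` distinct sites before
its end, one on each `ℓ¹`-sphere of smaller radius. By independence, the annealed weight of such a
path is therefore at most its simple-random-walk probability times `ρ ^ |x|₁`, where
`ρ = E[e^{-ω(0)}] < 1` because `ω(0) ≥ κ` with positive probability. Since these probabilities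
sum to at most one, `E[e(0,x)] ≤ ρ ^ |x|₁`. Markov's inequality at level `s^{m/2}`, for some
`s ∈ (ρ, 1)`, and a union bound over the `(2m+1)^d` sites of the sphere of radius `m` then give
the good event.
-/

open MeasureTheory ProbabilityTheory Filter Set
open scoped ENNReal NNReal BigOperators Topology

namespace RWRP

/-- Sites of the lattice `ℤ^d`. -/
abbrev Site (d : ℕ) := Fin d → ℤ

variable {d : ℕ}

/-- ℓ¹ distance between two sites, as a natural number. -/
def dist1 (u v : Site d) : ℕ := ∑ i, (u i - v i).natAbs

/-- ℓ¹ norm of a site, as a real number. -/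
noncomputable def norm1 (x : Site d) : ℝ := ∑ i, |(x i : ℝ)|

/-- ℓ^∞ norm of a site, as a real number. -/
noncomputable def norminf (x : Site d) : ℝ :=
  ((Finset.univ.sup fun i => (x i).natAbs : ℕ) : ℝ)

/-- A nearest-neighbour path on `ℤ^d`, encoded as the list of its successive positions. -/
def IsNNPath (r : List (Site d)) : Prop := r.Chain' fun u v => dist1 u v = 1

/-- `AdmissiblePath V x y r` : `r` is a nearest-neighbour path from `x` to `y` which stays
in `V` and visits `y` exactly at its final point.  Such paths are in natural bijection with
the trajectories of the simple random walk started at `x` and stopped at the hitting time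
`H(y)`, restricted to the event `{H(y) < T_V}`. -/
def AdmissiblePath (V : Set (Site d)) (x y : Site d) (r : List (Site d)) : Prop :=
  IsNNPath r ∧ r.head? = some x ∧ r.getLast? = some y ∧
    (∀ z ∈ r.dropLast, z ≠ y) ∧ ∀ z ∈ r, z ∈ V

/-- The weight of a path `r` for the simple random walk in the potential `ω` :
`(2d)^{-(|r|-1)} exp(-∑_{k<|r|-1} ω(r_k))`.  The weight of `r` is exactly
`E^x[exp(-∑_{k=0}^{H(y)-1} ω(S_k)) ; (S_0, …, S_{H(y)}) = r]`. -/
noncomputable def pathWeight (ω : Site d → ℝ) (r : List (Site d)) : ℝ≥0∞ :=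
  (2 * (d : ℝ≥0∞))⁻¹ ^ (r.length - 1) *
    ENNReal.ofReal (Real.exp (-((r.dropLast.map ω).sum)))

/-- `eCostE ω V x y = E^x[exp(-∑_{k=0}^{H(y)-1} ω(S_k)) 1_{H(y) < T_V}]`, as an
extended nonnegative real. -/
noncomputable def eCostE (ω : Site d → ℝ) (V : Set (Site d)) (x y : Site d) : ℝ≥0∞ :=
  ∑' r : {r : List (Site d) // AdmissiblePath V x y r}, pathWeight ω r

/-- `eCost ω V x y = E^x[exp(-∑_{k=0}^{H(y)-1} ω(S_k)) 1_{H(y) < T_V}]`, as a real number. -/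
noncomputable def eCost (ω : Site d → ℝ) (V : Set (Site d)) (x y : Site d) : ℝ :=
  (eCostE ω V x y).toReal

/-- The travel cost `a_V(x,y,ω) = -log e_V(x,y,ω)`, real-valued. -/
noncomputable def aCost (ω : Site d → ℝ) (V : Set (Site d)) (x y : Site d) : ℝ :=
  -Real.log (eCost ω V x y)

/-- The travel cost `a_V(x,y,ω) = -log e_V(x,y,ω)` with values in `[0,∞]`
(it equals `∞` when `e_V(x,y,ω) = 0`, i.e. when no admissible path exists). -/
noncomputable def aCostE (ω : Site d → ℝ) (V : Set (Site d)) (x y : Site d) : ℝ≥0∞ :=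
  if eCostE ω V x y = 0 then ⊤ else ENNReal.ofReal (aCost ω V x y)

/-- The total weight of the admissible paths from `0` to `x` (in the whole lattice)
satisfying the additional condition `p`; equals
`E^0[exp(-∑_{k=0}^{H(x)-1} ω(S_k)) 1_{H(x)<∞} 1_{p}]`. -/
noncomputable def qMass (ω : Site d → ℝ) (x : Site d) (p : List (Site d) → Prop) : ℝ≥0∞ :=
  ∑' r : {r : List (Site d) // AdmissiblePath Set.univ 0 x r ∧ p r}, pathWeight ω r

/-- `qProb ω x p = Q_ω^{0,x}(p)`, the probability, under the weighted path measure
`Q_ω^{0,x}`, that the walk stopped at `H(x)` satisfies `p`. -/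
noncomputable def qProb (ω : Site d → ℝ) (x : Site d) (p : List (Site d) → Prop) : ℝ :=
  ((eCostE ω Set.univ 0 x)⁻¹ * qMass ω x p).toReal

/-- The number of distinct sites visited by the walk strictly before the end of the
path `r`, i.e. `#A` with `A = {S_k ; 0 ≤ k < H(x)}`. -/
noncomputable def rangeSize (r : List (Site d)) : ℕ := r.dropLast.toFinset.card

/-- `qIntegral ω x f = Ê_ω^{0,x}[f]`, the expectation of the path functional `f` under the
weighted path measure `Q_ω^{0,x}`. -/
noncomputable def qIntegral (ω : Site d → ℝ) (x : Site d) (f : List (Site d) → ℝ≥0∞) : ℝ :=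
  ((eCostE ω Set.univ 0 x)⁻¹ *
    ∑' r : {r : List (Site d) // AdmissiblePath Set.univ 0 x r}, pathWeight ω r.1 * f r.1).toReal

/-- `qRange ω x = Ê_ω^{0,x}[#A]`, the mean size of the range of the walk before hitting `x`
under the weighted path measure. -/
noncomputable def qRange (ω : Site d → ℝ) (x : Site d) : ℝ :=
  qIntegral ω x fun r => (rangeSize r : ℝ≥0∞)

/-- A path realizing the first return of the walk to the origin. -/
def ReturnPath (r : List (Site d)) : Prop :=
  IsNNPath r ∧ r.head? = some 0 ∧ r.getLast? = some 0 ∧ 2 ≤ r.length ∧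
    ∀ z ∈ r.dropLast.tail, z ≠ (0 : Site d)

/-- `returnProb d = P^0(H₂(0) < ∞)`, the probability that the simple random walk on `ℤ^d`
returns to its starting point. -/
noncomputable def returnProb (d : ℕ) : ℝ :=
  (∑' r : {r : List (Site d) // ReturnPath r}, pathWeight (fun _ : Site d => (0 : ℝ)) r.1).toReal

/-- The cube `[-C‖x‖₁, C‖x‖₁]^d ∩ ℤ^d`. -/
def box (x : Site d) (C : ℝ) : Set (Site d) := {z | ∀ i, |((z i : ℤ) : ℝ)| ≤ C * norm1 x}

/-- The truncated potential `ω̂ = ω ∧ (4d/γ) log ‖x‖₁`. -/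
noncomputable def trunc (γ : ℝ) (x : Site d) (ω : Site d → ℝ) : Site d → ℝ :=
  fun z => min (ω z) (4 * d / γ * Real.log (norm1 x))

/-- The entropy `Ent(X) = E[X log X] - E[X] log E[X]` of a random variable under `μ`. -/
noncomputable def entropy {Ω : Type*} [MeasurableSpace Ω] (μ : Measure Ω) (X : Ω → ℝ) : ℝ :=
  (∫ ω, X ω * Real.log (X ω) ∂μ) - (∫ ω, X ω ∂μ) * Real.log (∫ ω, X ω ∂μ)

lemma dist1_comm (u v : Site d) : dist1 u v = dist1 v u := by
  simp only [dist1, ← Int.natAbs_neg (u _ - v _), neg_sub]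

lemma dist1_triangle (u v w : Site d) : dist1 u w ≤ dist1 u v + dist1 v w := by
  rw [dist1, dist1, dist1, ← Finset.sum_add_distrib]
  gcongr with i
  simpa using Int.natAbs_add_le (u i - v i) (v i - w i)

lemma norm1_eq_dist1 (x : Site d) : norm1 x = dist1 x 0 := by
  simp [norm1, dist1, Nat.cast_natAbs]

lemma natAbs_le_dist1 (x : Site d) (i : Fin d) : (x i).natAbs ≤ dist1 x 0 := by
  simpa [dist1] using
    Finset.single_le_sum (f := fun i => (x i).natAbs) (by simp) (Finset.mem_univ i)

lemma exists_mem_eq_of_isChain {α : Type*} (f : α → ℕ) {a : α} {l : List α}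
    (hl : (a :: l).IsChain fun u v => f v ≤ f u + 1) {b : α} (hb : b ∈ a :: l) {j : ℕ}
    (haj : f a ≤ j) (hjb : j ≤ f b) : ∃ z ∈ a :: l, f z = j := by
  induction l generalizing a with
  | nil => exact ⟨a, by simp, by simp_all; omega⟩
  | cons c l ih =>
    obtain ⟨hac, hl⟩ := List.isChain_cons_cons.mp hl
    rcases Nat.lt_or_ge j (f c) with hjc | hcj
    · exact ⟨a, by simp, by omega⟩
    rcases List.mem_cons.mp hb with rfl | hb
    · exact ⟨b, by simp, by omega⟩
    obtain ⟨z, hz, rfl⟩ := ih hl hb hcj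
    exact ⟨z, List.mem_cons_of_mem _ hz, rfl⟩

lemma IsNNPath.isChain_dist1_le_succ {r : List (Site d)} (hr : IsNNPath r) (y : Site d) :
    r.IsChain fun u v => dist1 v y ≤ dist1 u y + 1 :=
  List.IsChain.imp (fun u v (huv : dist1 u v = 1) => by
    have := dist1_triangle v u y
    rw [dist1_comm v u] at this
    omega) hr

lemma AdmissiblePath.exists_mem_dropLast_dist1_eq {V : Set (Site d)} {y x : Site d}
    {r : List (Site d)} (h : AdmissiblePath V y x r) {j : ℕ} (hj : j < dist1 x y) :
    ∃ z ∈ r.dropLast, dist1 z y = j := by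
  obtain ⟨hNN, hhead, hlast, -, -⟩ := h
  rcases r with _ | ⟨a, l⟩
  · simp at hhead
  obtain rfl : a = y := by simpa using hhead
  obtain ⟨z, hz, rfl⟩ := exists_mem_eq_of_isChain (fun z => dist1 z a)
    (hNN.isChain_dist1_le_succ a) (List.mem_of_getLast? hlast) (by simp [dist1]) hj.le
  refine ⟨z, List.mem_dropLast_of_mem_of_ne_getLast? hz ?_, rfl⟩
  rw [hlast]
  rintro ⟨⟩
  exact hj.false

lemma AdmissiblePath.dist1_le_rangeSize {V : Set (Site d)} {y x : Site d}
    {r : List (Site d)} (h : AdmissiblePath V y x r) : dist1 x y ≤ rangeSize r := by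
  classical
  calc dist1 x y = (Finset.range (dist1 x y)).card := (Finset.card_range _).symm
    _ ≤ (r.dropLast.toFinset.image fun z => dist1 z y).card := by
      refine Finset.card_le_card fun j hj => ?_
      obtain ⟨z, hz, rfl⟩ := h.exists_mem_dropLast_dist1_eq (Finset.mem_range.mp hj)
      exact Finset.mem_image_of_mem _ (List.mem_toFinset.mpr hz)
    _ ≤ rangeSize r := Finset.card_image_le

noncomputable def neighbors (y : Site d) : Finset (Site d) :=
  Finset.univ.image fun p : Fin d × Bool => y + Pi.single p.1 (if p.2 then 1 else -1)

lemma card_neighbors_le (y : Site d) : (neighbors y).card ≤ 2 * d :=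
  Finset.card_image_le.trans (by simp [mul_comm])

lemma mem_neighbors_of_dist1_eq_one {y z : Site d} (h : dist1 y z = 1) : z ∈ neighbors y := by
  obtain ⟨i, -, hi⟩ := Finset.exists_ne_zero_of_sum_ne_zero (h.trans_ne one_ne_zero)
  have hpair : ∀ j ≠ i, (y j - z j).natAbs + (y i - z i).natAbs ≤ 1 := fun j hji => by
    rw [← h, dist1, ← Finset.sum_pair (f := fun k => (y k - z k).natAbs) hji]
    exact Finset.sum_le_sum_of_subset (Finset.subset_univ _)
  have hi1 : (y i - z i).natAbs ≤ dist1 y z :=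
    Finset.single_le_sum (f := fun k => (y k - z k).natAbs) (by simp) (Finset.mem_univ i)
  refine Finset.mem_image.mpr ⟨(i, decide (y i < z i)), Finset.mem_univ _, funext fun j => ?_⟩
  by_cases hji : j = i
  · subst hji
    simp only [Pi.add_apply, Pi.single_eq_same, decide_eq_true_eq]
    split_ifs <;> omega
  · have := hpair j hji
    simp [hji]
    omega

noncomputable def srwWeight (r : List (Site d)) : ℝ≥0∞ := (2 * (d : ℝ≥0∞))⁻¹ ^ (r.length - 1)

lemma srwWeight_cons_of_ne_nil (y : Site d) {t : List (Site d)} (ht : t ≠ []) :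
    srwWeight (y :: t) = (2 * (d : ℝ≥0∞))⁻¹ * srwWeight t := by
  obtain ⟨n, hn⟩ := Nat.exists_eq_add_one.mpr (List.length_pos_iff.mpr ht)
  simp [srwWeight, hn, pow_succ']

lemma AdmissiblePath.ne_nil {V : Set (Site d)} {y x : Site d} {r : List (Site d)}
    (h : AdmissiblePath V y x r) : r ≠ [] := by
  rintro rfl
  simp [AdmissiblePath] at h

lemma AdmissiblePath.eq_singleton {V : Set (Site d)} {x : Site d} {r : List (Site d)}
    (h : AdmissiblePath V x x r) : r = [x] := by
  obtain ⟨-, hhead, -, havoid, -⟩ := h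
  rcases r with _ | ⟨a, _ | ⟨b, t⟩⟩
  · simp at hhead
  · simpa using hhead
  · obtain rfl : a = x := by simpa using hhead
    exact absurd rfl (havoid a (by simp))

lemma AdmissiblePath.tail {V : Set (Site d)} {y x : Site d} {r : List (Site d)}
    (h : AdmissiblePath V y x r) (hyx : y ≠ x) :
    r = y :: r.tail ∧ r.tail.headI ∈ neighbors y ∧ AdmissiblePath V r.tail.headI x r.tail := by
  obtain ⟨hNN, hhead, hlast, havoid, hV⟩ := h
  rcases r with _ | ⟨a, _ | ⟨b, t⟩⟩
  · simp at hhead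
  · simp_all
  obtain rfl : a = y := by simpa using hhead
  obtain ⟨hab, hNN⟩ := List.isChain_cons_cons.mp hNN
  refine ⟨rfl, mem_neighbors_of_dist1_eq_one hab, hNN, rfl, by simpa using hlast, ?_, ?_⟩
  · exact fun z hz => havoid z (by simp_all [List.dropLast_cons_cons])
  · exact fun z hz => hV z (List.mem_cons_of_mem _ hz)

/-- Induction on the length: after the first step the path is admissible from one of the at most
`2d` neighbours, each reached with probability `(2d)⁻¹`. -/
lemma sum_srwWeight_le_one {V : Set (Site d)} {x : Site d} (N : ℕ) :
    ∀ (y : Site d) (F : Finset (List (Site d))),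
      (∀ r ∈ F, AdmissiblePath V y x r ∧ r.length ≤ N) → ∑ r ∈ F, srwWeight r ≤ 1 := by
  induction N with
  | zero =>
    intro y F hF
    rw [Finset.sum_eq_zero fun r hr => absurd (List.eq_nil_of_length_eq_zero
      (Nat.le_zero.mp (hF r hr).2)) (hF r hr).1.ne_nil]
    exact zero_le_one
  | succ N ih =>
    intro y F hF
    by_cases hyx : y = x
    · subst hyx
      calc ∑ r ∈ F, srwWeight r ≤ ∑ r ∈ {[y]}, srwWeight r :=
            Finset.sum_le_sum_of_subset fun r hr => by simp [(hF r hr).1.eq_singleton]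
        _ = 1 := by simp [srwWeight]
    have hd : d ≠ 0 := by
      rintro rfl
      exact hyx (Subsingleton.elim _ _)
    have htail := fun r (hr : r ∈ F) => (hF r hr).1.tail hyx
    have hG : ∀ t ∈ F.image List.tail, t.headI ∈ neighbors y := by
      simp only [Finset.mem_image]
      rintro _ ⟨r, hr, rfl⟩
      exact (htail r hr).2.1
    calc ∑ r ∈ F, srwWeight r = ∑ r ∈ F, (2 * (d : ℝ≥0∞))⁻¹ * srwWeight r.tail := by
          refine Finset.sum_congr rfl fun r hr => ?_
          rw [(htail r hr).1]
          exact srwWeight_cons_of_ne_nil y (htail r hr).2.2.ne_nil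
      _ = (2 * (d : ℝ≥0∞))⁻¹ * ∑ t ∈ F.image List.tail, srwWeight t := by
          rw [← Finset.mul_sum, Finset.sum_image fun r hr s hs hrs => by
            rw [(htail r hr).1, (htail s hs).1, hrs]]
      _ = (2 * (d : ℝ≥0∞))⁻¹ *
            ∑ z ∈ neighbors y, ∑ t ∈ F.image List.tail with t.headI = z, srwWeight t := by
          rw [Finset.sum_fiberwise_of_maps_to hG]
      _ ≤ (2 * (d : ℝ≥0∞))⁻¹ * ∑ _z ∈ neighbors y, 1 := by
          gcongr with z
          refine ih z _ fun t ht => ?_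
          obtain ⟨htG, rfl⟩ := Finset.mem_filter.mp ht
          obtain ⟨r, hr, rfl⟩ := Finset.mem_image.mp htG
          refine ⟨(htail r hr).2.2, ?_⟩
          have := (hF r hr).2
          simp only [List.length_tail]
          omega
      _ ≤ (2 * (d : ℝ≥0∞))⁻¹ * (2 * d) := by
          gcongr
          simpa using (Nat.cast_le (α := ℝ≥0∞)).mpr (card_neighbors_le y)
      _ = 1 := ENNReal.inv_mul_cancel (by simpa using hd)
          (ENNReal.mul_ne_top ENNReal.ofNat_ne_top (ENNReal.natCast_ne_top d))

lemma tsum_srwWeight_le_one (V : Set (Site d)) (y x : Site d) :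
    ∑' r : {r : List (Site d) // AdmissiblePath V y x r}, srwWeight r.1 ≤ 1 := by
  refine ENNReal.summable.tsum_le_of_sum_le fun s => ?_
  rw [← Finset.sum_image (f := srwWeight) Subtype.val_injective.injOn]
  refine sum_srwWeight_le_one (V := V) (x := x) ((s.image Subtype.val).sup List.length) y _
    fun r hr => ⟨?_, Finset.le_sup hr⟩
  obtain ⟨r, -, rfl⟩ := Finset.mem_image.mp hr
  exact r.2

lemma measurable_pathWeight (r : List (Site d)) :
    Measurable fun ω : Site d → ℝ => pathWeight ω r := by
  classical
  unfold pathWeight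
  simp_rw [Finset.sum_list_map_count]
  fun_prop

lemma measurable_eCostE (V : Set (Site d)) (y x : Site d) :
    Measurable fun ω : Site d → ℝ => eCostE ω V y x :=
  Measurable.tsum fun r => measurable_pathWeight r.1

lemma lintegral_exp_neg_lt_one {Ω : Type*} [MeasurableSpace Ω] (μ : Measure Ω)
    [IsProbabilityMeasure μ] {X : Ω → ℝ} (hX : Measurable X) (h0 : ∀ᵐ ω ∂μ, 0 ≤ X ω) {κ : ℝ}
    (hκ : 0 < κ) (hκX : 0 < μ {ω | κ ≤ X ω}) :
    ∫⁻ ω, ENNReal.ofReal (Real.exp (-X ω)) ∂μ < 1 := by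
  set S := {ω | κ ≤ X ω}
  have hS : MeasurableSet S := measurableSet_le measurable_const hX
  have hin : ∫⁻ ω in S, ENNReal.ofReal (Real.exp (-X ω)) ∂μ < μ S :=
    calc ∫⁻ ω in S, ENNReal.ofReal (Real.exp (-X ω)) ∂μ
        ≤ ∫⁻ _ in S, ENNReal.ofReal (Real.exp (-κ)) ∂μ :=
          setLIntegral_mono measurable_const fun ω hω =>
            ENNReal.ofReal_le_ofReal (Real.exp_le_exp.mpr (neg_le_neg hω))
      _ = ENNReal.ofReal (Real.exp (-κ)) * μ S := setLIntegral_const _ _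
      _ < 1 * μ S := by
          refine (ENNReal.mul_lt_mul_iff_left hκX.ne' (measure_ne_top μ S)).mpr ?_
          simpa using hκ
      _ = μ S := one_mul _
  have hout : ∫⁻ ω in Sᶜ, ENNReal.ofReal (Real.exp (-X ω)) ∂μ ≤ μ Sᶜ :=
    calc ∫⁻ ω in Sᶜ, ENNReal.ofReal (Real.exp (-X ω)) ∂μ ≤ ∫⁻ _ in Sᶜ, 1 ∂μ :=
          setLIntegral_mono_ae aemeasurable_const (h0.mono fun ω hω _ => by simpa using hω)
      _ = μ Sᶜ := setLIntegral_one _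
  calc ∫⁻ ω, ENNReal.ofReal (Real.exp (-X ω)) ∂μ
      = ∫⁻ ω in S, ENNReal.ofReal (Real.exp (-X ω)) ∂μ +
          ∫⁻ ω in Sᶜ, ENNReal.ofReal (Real.exp (-X ω)) ∂μ := (lintegral_add_compl _ hS).symm
    _ < μ S + μ Sᶜ :=
        ENNReal.add_lt_add_of_lt_of_le (hout.trans_lt (measure_lt_top _ _)).ne hin hout
    _ = 1 := by rw [measure_add_measure_compl hS, measure_univ]

lemma exp_neg_sum_le_prod (ω : Site d → ℝ) (hω : ∀ z, 0 ≤ ω z) (l : List (Site d)) :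
    ENNReal.ofReal (Real.exp (-(l.map ω).sum)) ≤
      ∏ z ∈ l.toFinset, ENNReal.ofReal (Real.exp (-ω z)) := by
  classical
  rw [← ENNReal.ofReal_prod_of_nonneg fun _ _ => (Real.exp_pos _).le, ← Real.exp_sum,
    Finset.sum_neg_distrib, Finset.sum_list_map_count]
  refine ENNReal.ofReal_le_ofReal (Real.exp_le_exp.mpr (neg_le_neg ?_))
  refine Finset.sum_le_sum fun z hz => le_smul_of_one_le_left (hω z) ?_
  exact_mod_cast List.count_pos_iff.mpr (List.mem_toFinset.mp hz)

lemma lintegral_pathWeight_le (μ : Measure (Site d → ℝ))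
    (hindep : iIndepFun (fun z : Site d => fun ω => ω z) μ)
    (hident : ∀ z : Site d, IdentDistrib (fun ω => ω z) (fun ω => ω 0) μ μ)
    (hpos : ∀ᵐ ω ∂μ, ∀ z : Site d, 0 ≤ ω z) (r : List (Site d)) :
    ∫⁻ ω, pathWeight ω r ∂μ ≤
      srwWeight r * (∫⁻ ω, ENNReal.ofReal (Real.exp (-ω 0)) ∂μ) ^ rangeSize r := by
  have hmeas : Measurable fun t : ℝ => ENNReal.ofReal (Real.exp (-t)) := by fun_prop
  calc ∫⁻ ω, pathWeight ω r ∂μ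
      = srwWeight r * ∫⁻ ω, ENNReal.ofReal (Real.exp (-(r.dropLast.map ω).sum)) ∂μ :=
        lintegral_const_mul _ (by classical simp_rw [Finset.sum_list_map_count]; fun_prop)
    _ ≤ srwWeight r * ∫⁻ ω, ∏ z ∈ r.dropLast.toFinset, ENNReal.ofReal (Real.exp (-ω z)) ∂μ := by
        gcongr srwWeight r * ?_
        exact lintegral_mono_ae (hpos.mono fun ω hω => exp_neg_sum_le_prod ω hω _)
    _ = srwWeight r * ∏ z ∈ r.dropLast.toFinset, ∫⁻ ω, ENNReal.ofReal (Real.exp (-ω z)) ∂μ := by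
        congr 1
        exact lintegral_prod_eq_prod_lintegral_of_indepFun _ _ (hindep.comp _ fun _ => hmeas)
          fun z => hmeas.comp (measurable_pi_apply z)
    _ = srwWeight r * ∏ _z ∈ r.dropLast.toFinset, ∫⁻ ω, ENNReal.ofReal (Real.exp (-ω 0)) ∂μ := by
        congr 1
        exact Finset.prod_congr rfl fun z _ => ((hident z).comp hmeas).lintegral_eq
    _ = srwWeight r * (∫⁻ ω, ENNReal.ofReal (Real.exp (-ω 0)) ∂μ) ^ rangeSize r := by
        rw [Finset.prod_const]
        rfl

lemma lintegral_eCostE_le (μ : Measure (Site d → ℝ))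
    (hindep : iIndepFun (fun z : Site d => fun ω => ω z) μ)
    (hident : ∀ z : Site d, IdentDistrib (fun ω => ω z) (fun ω => ω 0) μ μ)
    (hpos : ∀ᵐ ω ∂μ, ∀ z : Site d, 0 ≤ ω z) (V : Set (Site d)) (y x : Site d)
    (hρ : ∫⁻ ω, ENNReal.ofReal (Real.exp (-ω 0)) ∂μ ≤ 1) :
    ∫⁻ ω, eCostE ω V y x ∂μ ≤ (∫⁻ ω, ENNReal.ofReal (Real.exp (-ω 0)) ∂μ) ^ dist1 x y := by
  set ρ := ∫⁻ ω, ENNReal.ofReal (Real.exp (-ω 0)) ∂μ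
  calc ∫⁻ ω, eCostE ω V y x ∂μ
      = ∑' r : {r // AdmissiblePath V y x r}, ∫⁻ ω, pathWeight ω r ∂μ :=
        lintegral_tsum fun r => (measurable_pathWeight r.1).aemeasurable
    _ ≤ ∑' r : {r // AdmissiblePath V y x r}, srwWeight r.1 * ρ ^ dist1 x y :=
        ENNReal.tsum_le_tsum fun r => (lintegral_pathWeight_le μ hindep hident hpos r.1).trans
          (mul_le_mul_right (pow_le_pow_right_of_le_one' hρ r.2.dist1_le_rangeSize) _)
    _ ≤ ρ ^ dist1 x y := by
        rw [ENNReal.tsum_mul_right]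
        exact mul_le_of_le_one_left' (tsum_srwWeight_le_one V y x)

noncomputable def sphere1 (m : ℕ) : Finset (Site d) :=
  (Fintype.piFinset fun _ => Finset.Icc (-(m : ℤ)) m).filter fun x => dist1 x 0 = m

lemma mem_sphere1 {m : ℕ} {x : Site d} : x ∈ sphere1 m ↔ dist1 x 0 = m := by
  simp only [sphere1, Finset.mem_filter, Fintype.mem_piFinset, Finset.mem_Icc,
    and_iff_right_iff_imp]
  intro hx i
  have := natAbs_le_dist1 x i
  omega

lemma card_sphere1_le (m : ℕ) : (sphere1 (d := d) m).card ≤ (2 * m + 1) ^ d :=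
  (Finset.card_filter_le _ _).trans <| by
    simp [Int.card_Icc, show ((m : ℤ) + 1 + m).toNat = 2 * m + 1 by omega]

lemma measure_biUnion_sphere1_le {Ω : Type*} [MeasurableSpace Ω] (μ : Measure Ω)
    {f : Site d → Ω → ℝ≥0∞} (hf : ∀ x, Measurable (f x)) (m : ℕ) {a ε : ℝ≥0∞} (hε0 : ε ≠ 0)
    (hε : ε ≠ ∞) (hint : ∀ x ∈ sphere1 m, ∫⁻ ω, f x ω ∂μ ≤ a) :
    μ (⋃ x ∈ sphere1 m, {ω | ε ≤ f x ω}) ≤ (2 * m + 1) ^ d * (a / ε) :=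
  calc μ (⋃ x ∈ sphere1 m, {ω | ε ≤ f x ω}) ≤ ∑ x ∈ sphere1 m, μ {ω | ε ≤ f x ω} :=
        measure_biUnion_finset_le _ _
    _ ≤ ∑ _x ∈ sphere1 m, a / ε := Finset.sum_le_sum fun x hx =>
        (meas_ge_le_lintegral_div (hf x).aemeasurable hε0 hε).trans (by gcongr; exact hint x hx)
    _ = (sphere1 (d := d) m).card * (a / ε) := by rw [Finset.sum_const, nsmul_eq_mul]
    _ ≤ (2 * m + 1) ^ d * (a / ε) := by
        gcongr
        exact_mod_cast card_sphere1_le m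

lemma eventually_pow_mul_exp_neg_le (d : ℕ) {c : ℝ} (hc : 0 < c) :
    ∀ᶠ m : ℕ in atTop, (2 * m + 1 : ℝ) ^ d * Real.exp (-c * m) ≤ Real.exp (-(c / 2) * m) := by
  have hlo := (isLittleO_pow_exp_pos_mul_atTop d (half_pos hc)).bound
    (show (0 : ℝ) < 3⁻¹ ^ d by positivity)
  filter_upwards [tendsto_natCast_atTop_atTop.eventually hlo, eventually_ge_atTop 1] with m hm hm1
  rw [Real.norm_of_nonneg (by positivity), Real.norm_of_nonneg (Real.exp_pos _).le] at hm
  have h3 : (2 * m + 1 : ℝ) ^ d ≤ 3 ^ d * (m : ℝ) ^ d := by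
    rw [← mul_pow]
    have : (1 : ℝ) ≤ m := by exact_mod_cast hm1
    gcongr
    linarith
  calc (2 * m + 1 : ℝ) ^ d * Real.exp (-c * m)
      ≤ 3 ^ d * (3⁻¹ ^ d * Real.exp (c / 2 * m)) * Real.exp (-c * m) := by gcongr; grw [h3, hm]
    _ = Real.exp (-(c / 2) * m) := by
        rw [← mul_assoc, ← mul_pow, mul_inv_cancel₀ three_ne_zero, one_pow, one_mul,
          ← Real.exp_add]
        ring_nf

lemma exists_measure_biUnion_sphere1_le {Ω : Type*} [MeasurableSpace Ω] (μ : Measure Ω)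
    {f : Site d → Ω → ℝ≥0∞} (hf : ∀ x, Measurable (f x)) {ρ : ℝ≥0∞} (hρ : ρ < 1)
    (hint : ∀ x, ∫⁻ ω, f x ω ∂μ ≤ ρ ^ dist1 x 0) :
    ∃ C₂ C₃ : ℝ, 0 < C₂ ∧ 0 < C₃ ∧ ∃ m₀ : ℕ, ∀ m ≥ m₀,
      μ (⋃ x ∈ sphere1 m, {ω | ENNReal.ofReal (Real.exp (-C₃ * m)) ≤ f x ω}) ≤
        ENNReal.ofReal (Real.exp (-C₂ * m)) := by
  obtain ⟨s, hρs, hs1⟩ := exists_between hρ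
  have hs0 : 0 < s.toReal := ENNReal.toReal_pos (pos_of_gt hρs).ne' hs1.ne_top
  set c := -Real.log s.toReal
  have hc : 0 < c := neg_pos.mpr (Real.log_neg hs0 ((ENNReal.toReal_lt_toReal hs1.ne_top
    ENNReal.one_ne_top).mpr hs1 |>.trans_eq ENNReal.toReal_one))
  have hs : s = ENNReal.ofReal (Real.exp (-c)) := by
    rw [neg_neg, Real.exp_log hs0, ENNReal.ofReal_toReal hs1.ne_top]
  obtain ⟨m₀, hm₀⟩ := (eventually_pow_mul_exp_neg_le d (half_pos hc)).exists_forall_of_atTop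
  refine ⟨c / 4, c / 2, by positivity, by positivity, m₀, fun m hm => ?_⟩
  have hsphere : ∀ x ∈ sphere1 m, ∫⁻ ω, f x ω ∂μ ≤ ENNReal.ofReal (Real.exp (-c * m)) :=
    fun x hx => calc ∫⁻ ω, f x ω ∂μ ≤ ρ ^ m := mem_sphere1.mp hx ▸ hint x
      _ ≤ s ^ m := pow_le_pow_left' hρs.le m
      _ = ENNReal.ofReal (Real.exp (-c * m)) := by
        rw [hs, ← ENNReal.ofReal_pow (Real.exp_pos _).le, ← Real.exp_nat_mul, mul_comm, neg_mul]
  refine (measure_biUnion_sphere1_le μ hf m (by positivity) ENNReal.ofReal_ne_top hsphere).trans ?_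
  have hcast : (2 * m + 1 : ℝ≥0∞) ^ d = ENNReal.ofReal ((2 * m + 1 : ℝ) ^ d) := by
    rw [ENNReal.ofReal_pow (by positivity)]
    exact_mod_cast (congrArg (· ^ d) (ENNReal.ofReal_natCast (2 * m + 1))).symm
  rw [hcast, ← ENNReal.ofReal_div_of_pos (Real.exp_pos _), ← ENNReal.ofReal_mul (by positivity),
    ← Real.exp_sub]
  refine ENNReal.ofReal_le_ofReal ((le_of_eq ?_).trans ((hm₀ m hm).trans_eq ?_)) <;> ring_nf

theorem eCost_decay_on_good_event_general
    (d : ℕ) (μ : Measure ((Site d) → ℝ)) [IsProbabilityMeasure μ]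
    (hindep : iIndepFun (fun z : Site d => fun ω => ω z) μ)
    (hident : ∀ z : Site d, IdentDistrib (fun ω => ω z) (fun ω => ω 0) μ μ)
    (hpos : ∀ᵐ ω ∂μ, ∀ z : Site d, 0 ≤ ω z)
    (κ : ℝ) (hκ : 0 < κ) (hκpos : 0 < μ {ω | κ ≤ ω 0}) :
    ∃ C₁ C₂ C₃ : ℝ, 0 < C₁ ∧ 0 < C₂ ∧ 0 < C₃ ∧ ∃ M : ℕ, 0 < M ∧
      ∃ m₀ : ℕ, ∀ m : ℕ, m₀ ≤ m →
        ∃ A : Set ((Site d) → ℝ), MeasurableSet A ∧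
          μ Aᶜ ≤ ENNReal.ofReal (C₁ * Real.exp (-C₂ * m)) ∧
          ∀ ω ∈ A, ∀ x : Site d, norm1 x = m →
            eCost ω Set.univ 0 x ≤ Real.exp (-C₃ * m) := by
  have hρ : ∫⁻ ω, ENNReal.ofReal (Real.exp (-ω 0)) ∂μ < 1 :=
    lintegral_exp_neg_lt_one μ (measurable_pi_apply 0) (hpos.mono fun ω hω => hω 0) hκ hκpos
  obtain ⟨C₂, C₃, hC₂, hC₃, m₀, hm₀⟩ := exists_measure_biUnion_sphere1_le μ
    (measurable_eCostE univ 0) hρ fun x => lintegral_eCostE_le μ hindep hident hpos univ 0 x hρ.le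
  refine ⟨1, C₂, C₃, one_pos, hC₂, hC₃, 1, one_pos, m₀, fun m hm =>
    ⟨(⋃ x ∈ sphere1 m, {ω | ENNReal.ofReal (Real.exp (-C₃ * m)) ≤ eCostE ω univ 0 x})ᶜ, ?_, ?_, ?_⟩⟩
  · exact (Finset.measurableSet_biUnion _ fun x _ =>
      measurableSet_le measurable_const (measurable_eCostE univ 0 x)).compl
  · simpa using hm₀ m hm
  · intro ω hω x hx
    have hxm : x ∈ sphere1 m :=
      mem_sphere1.mpr (by exact_mod_cast (norm1_eq_dist1 x).symm.trans hx)
    have hle : eCostE ω univ 0 x < ENNReal.ofReal (Real.exp (-C₃ * m)) :=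
      not_le.mp fun h => hω (Set.mem_biUnion hxm h)
    exact ENNReal.toReal_le_of_le_ofReal (Real.exp_pos _).le hle.le

/-- **Lemma 3.1.**  Fix `κ > 0` with `ℙ(ω(0) ≥ κ) > 0`.  There exist constants
`0 < C₁, C₂, C₃ < ∞` and a box size `M ∈ ℕ` such that for all sufficiently large `m`,
there is an event `A_m` with `ℙ(A_mᶜ) ≤ C₁ e^{-C₂ m}` on which `e(0,x) ≤ e^{-C₃ m}`
simultaneously for all `x ∈ ℤ^d` with `‖x‖₁ = m`. -/
theorem eCost_decay_on_good_event
    (d : ℕ) (hd : 2 ≤ d) (μ : Measure ((Site d) → ℝ)) [IsProbabilityMeasure μ]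
    (hindep : iIndepFun (fun z : Site d => fun ω => ω z) μ)
    (hident : ∀ z : Site d, IdentDistrib (fun ω => ω z) (fun ω => ω 0) μ μ)
    (hpos : ∀ᵐ ω ∂μ, ∀ z : Site d, 0 ≤ ω z)
    (hnontriv : μ {ω | ω 0 = 0} < 1)
    (κ : ℝ) (hκ : 0 < κ) (hκpos : 0 < μ {ω | κ ≤ ω 0}) :
    ∃ C₁ C₂ C₃ : ℝ, 0 < C₁ ∧ 0 < C₂ ∧ 0 < C₃ ∧ ∃ M : ℕ, 0 < M ∧
      ∃ m₀ : ℕ, ∀ m : ℕ, m₀ ≤ m →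
        ∃ A : Set ((Site d) → ℝ), MeasurableSet A ∧
          μ Aᶜ ≤ ENNReal.ofReal (C₁ * Real.exp (-C₂ * m)) ∧
          ∀ ω ∈ A, ∀ x : Site d, norm1 x = m →
            eCost ω Set.univ 0 x ≤ Real.exp (-C₃ * m) :=
  eCost_decay_on_good_event_general d μ hindep hident hpos κ hκ hκpos

end RWRP
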